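/- Uniform approximation of the kmeans objective (Lemma A.2): Under parts (i)–(iii) of Assumption 1, for every ε > 0, P( sup over all group assignments g ∈ {1,…,G}^{N_n} and all μ ∈ M of | Q(g, μ) − (N_n T_n)^{-1} Σ_i Σ_t (σ_i v_{it})² − N_n^{-1} Σ_i (μ⁰_{g⁰_i} − μ_{g_i})² | > ε ) → 0 as n → ∞. -/

import Mathlib

/-!
Expanding the square, `Q(g, μ)` minus the two approximating terms is the cross term
`2 (NT)⁻¹ Σᵢ (μ⁰_{g⁰ᵢ} - μ_{gᵢ}) Σₜ σᵢ vᵢₜ`. Since `M` is bounded, it is dominated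
uniformly in `(g, μ)` by a constant times `S = (NT)⁻¹ Σᵢ |Σₜ σᵢ vᵢₜ|`, which no longer
depends on `(g, μ)`. Independence over `t` gives `E (Σₜ vᵢₜ)² = T`, hence
`E S ≤ (NT)⁻¹ Σᵢ |σᵢ| √T`, and Cauchy–Schwarz bounds this by `√(N⁻¹ Σᵢ σᵢ² / T) → 0`.
Markov's inequality concludes.
-/

open MeasureTheory ProbabilityTheory Filter Finset

section Moments

variable {Ω : Type*} [MeasurableSpace Ω] {μ : Measure Ω}

lemma memLp_two_of_integral_sq_ne_zero {f : Ω → ℝ} (hf : AEStronglyMeasurable f μ)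
    (h : ∫ ω, f ω ^ 2 ∂μ ≠ 0) : MemLp f 2 μ :=
  (memLp_two_iff_integrable_sq hf).2 (by_contra fun h' => h (integral_undef h'))

lemma integral_abs_le_sqrt_integral_sq [IsProbabilityMeasure μ] {f : Ω → ℝ}
    (hf : MemLp f 2 μ) :
    ∫ ω, |f ω| ∂μ ≤ Real.sqrt (∫ ω, f ω ^ 2 ∂μ) := by
  have h := variance_eq_sub hf.abs
  simp only [Pi.pow_apply, Pi.abs_apply, sq_abs] at h
  exact Real.le_sqrt_of_sq_le (by linarith [variance_nonneg |f| μ])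

lemma integral_sq_sum_eq_card [IsProbabilityMeasure μ] {ι : Type*} {v : ι → Ω → ℝ}
    (hmeas : ∀ t, Measurable (v t)) (hindep : iIndepFun v μ)
    (hmean : ∀ t, ∫ ω, v t ω ∂μ = 0) (hvar : ∀ t, ∫ ω, v t ω ^ 2 ∂μ = 1) (s : Finset ι) :
    ∫ ω, (∑ t ∈ s, v t ω) ^ 2 ∂μ = #s := by
  have hL2 : ∀ t, MemLp (v t) 2 μ := fun t =>
    memLp_two_of_integral_sq_ne_zero (hmeas t).aestronglyMeasurable (by simp [hvar])
  have hsum_mean : ∫ ω, ∑ t ∈ s, v t ω ∂μ = 0 := by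
    rw [integral_finsetSum _ fun t _ => (hL2 t).integrable one_le_two]
    simp [hmean]
  have hvariance := IndepFun.variance_sum (s := s) (fun t _ => hL2 t)
    fun i _ j _ hij => hindep.indepFun hij
  rw [variance_of_integral_eq_zero (by fun_prop) (by simpa using hsum_mean)] at hvariance
  simpa [variance_of_integral_eq_zero (hmeas _).aemeasurable (hmean _), hvar] using hvariance

lemma integral_abs_sum_le_sqrt_card [IsProbabilityMeasure μ] {ι : Type*} {v : ι → Ω → ℝ}
    (hmeas : ∀ t, Measurable (v t)) (hindep : iIndepFun v μ)
    (hmean : ∀ t, ∫ ω, v t ω ∂μ = 0) (hvar : ∀ t, ∫ ω, v t ω ^ 2 ∂μ = 1) (s : Finset ι) :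
    ∫ ω, |∑ t ∈ s, v t ω| ∂μ ≤ Real.sqrt #s := by
  have hL2 : MemLp (fun ω => ∑ t ∈ s, v t ω) 2 μ := memLp_finsetSum _ fun t _ =>
    memLp_two_of_integral_sq_ne_zero (hmeas t).aestronglyMeasurable (by simp [hvar])
  simpa [integral_sq_sum_eq_card hmeas hindep hmean hvar s] using
    integral_abs_le_sqrt_integral_sq hL2

end Moments

lemma inv_mul_sum_abs_mul_sqrt_le (N T : ℕ) (σ : ℕ → ℝ) :
    ((N : ℝ) * T)⁻¹ * ∑ i ∈ range N, |σ i| * Real.sqrt T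
      ≤ Real.sqrt (((N : ℝ)⁻¹ * ∑ i ∈ range N, σ i ^ 2) / T) := by
  have hCS : (∑ i ∈ range N, |σ i|) ^ 2 ≤ N * ∑ i ∈ range N, σ i ^ 2 := by
    simpa using sq_sum_le_card_mul_sum_sq (s := range N) (f := fun i => |σ i|)
  rw [← sum_mul]
  refine Real.le_sqrt_of_sq_le ?_
  rcases eq_or_ne (N : ℝ) 0 with hN | hN
  · simp [hN]
  rcases eq_or_ne (T : ℝ) 0 with hT | hT
  · simp [hT]
  calc (((N : ℝ) * T)⁻¹ * ((∑ i ∈ range N, |σ i|) * Real.sqrt T)) ^ 2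
      = ((N : ℝ) ^ 2 * T)⁻¹ * (∑ i ∈ range N, |σ i|) ^ 2 := by
        rw [mul_pow, mul_pow, Real.sq_sqrt (Nat.cast_nonneg _)]
        field_simp
    _ ≤ ((N : ℝ) ^ 2 * T)⁻¹ * (N * ∑ i ∈ range N, σ i ^ 2) := by gcongr
    _ = ((N : ℝ)⁻¹ * ∑ i ∈ range N, σ i ^ 2) / T := by
        field_simp

section CrossSection

variable {Ω : Type*} [MeasurableSpace Ω] {μ : Measure Ω} [IsProbabilityMeasure μ]
  {v : ℕ → ℕ → Ω → ℝ}

lemma integrable_inv_mul_sum_abs_sum (hmeas : ∀ i t, Measurable (v i t))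
    (hvar : ∀ i t, ∫ ω, v i t ω ^ 2 ∂μ = 1) (N T : ℕ) (σ : ℕ → ℝ) :
    Integrable
      (fun ω => ((N : ℝ) * T)⁻¹ * ∑ i ∈ range N, |∑ t ∈ range T, σ i * v i t ω|) μ := by
  have hint : ∀ i t, Integrable (v i t) μ := fun i t =>
    (memLp_two_of_integral_sq_ne_zero (hmeas i t).aestronglyMeasurable
      (by simp [hvar])).integrable one_le_two
  exact (integrable_finsetSum _ fun i _ =>
    (integrable_finsetSum _ fun t _ => (hint i t).const_mul _).abs).const_mul _

lemma integral_inv_mul_sum_abs_sum_le (hmeas : ∀ i t, Measurable (v i t))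
    (hindep : ∀ i, iIndepFun (v i) μ) (hmean : ∀ i t, ∫ ω, v i t ω ∂μ = 0)
    (hvar : ∀ i t, ∫ ω, v i t ω ^ 2 ∂μ = 1) (N T : ℕ) (σ : ℕ → ℝ) :
    ∫ ω, ((N : ℝ) * T)⁻¹ * ∑ i ∈ range N, |∑ t ∈ range T, σ i * v i t ω| ∂μ
      ≤ Real.sqrt (((N : ℝ)⁻¹ * ∑ i ∈ range N, σ i ^ 2) / T) := by
  have hint : ∀ i, Integrable (fun ω => |∑ t ∈ range T, v i t ω|) μ := fun i =>
    (integrable_finsetSum _ fun t _ => (memLp_two_of_integral_sq_ne_zero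
      (hmeas i t).aestronglyMeasurable (by simp [hvar])).integrable one_le_two).abs
  calc ∫ ω, ((N : ℝ) * T)⁻¹ * ∑ i ∈ range N, |∑ t ∈ range T, σ i * v i t ω| ∂μ
      = ((N : ℝ) * T)⁻¹ * ∑ i ∈ range N, |σ i| * ∫ ω, |∑ t ∈ range T, v i t ω| ∂μ := by
        simp_rw [← mul_sum, abs_mul]
        rw [integral_const_mul, integral_finsetSum _ fun i _ => (hint i).const_mul _]
        simp_rw [integral_const_mul]
    _ ≤ ((N : ℝ) * T)⁻¹ * ∑ i ∈ range N, |σ i| * Real.sqrt T := by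
        gcongr with i
        simpa using
          integral_abs_sum_le_sqrt_card (hmeas i) (hindep i) (hmean i) (hvar i) (range T)
    _ ≤ Real.sqrt (((N : ℝ)⁻¹ * ∑ i ∈ range N, σ i ^ 2) / T) :=
        inv_mul_sum_abs_mul_sqrt_le N T σ

end CrossSection

lemma objective_sub_eq_cross_term (N T : ℕ) (hT : T ≠ 0) (a : ℕ → ℝ) (e : ℕ → ℕ → ℝ) :
    ((N : ℝ) * T)⁻¹ * ∑ i ∈ range N, ∑ t ∈ range T, (a i + e i t) ^ 2
      - ((N : ℝ) * T)⁻¹ * ∑ i ∈ range N, ∑ t ∈ range T, e i t ^ 2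
      - (N : ℝ)⁻¹ * ∑ i ∈ range N, a i ^ 2
      = ((N : ℝ) * T)⁻¹ * ∑ i ∈ range N, 2 * a i * ∑ t ∈ range T, e i t := by
  have hexpand : ∀ i, ∑ t ∈ range T, (a i + e i t) ^ 2
      = ∑ t ∈ range T, e i t ^ 2 + T * a i ^ 2 + 2 * a i * ∑ t ∈ range T, e i t :=
    fun i => by
    simp only [add_sq, sum_add_distrib, sum_const, card_range, nsmul_eq_mul, mul_sum]
    ring
  simp only [hexpand, sum_add_distrib, ← mul_sum]
  have : (T : ℝ) ≠ 0 := Nat.cast_ne_zero.2 hT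
  field_simp
  ring

lemma abs_objective_sub_le (N T : ℕ) (hT : T ≠ 0) (a : ℕ → ℝ) (e : ℕ → ℕ → ℝ) {C : ℝ}
    (ha : ∀ i, |a i| ≤ C) :
    |((N : ℝ) * T)⁻¹ * ∑ i ∈ range N, ∑ t ∈ range T, (a i + e i t) ^ 2
      - ((N : ℝ) * T)⁻¹ * ∑ i ∈ range N, ∑ t ∈ range T, e i t ^ 2
      - (N : ℝ)⁻¹ * ∑ i ∈ range N, a i ^ 2|
      ≤ 2 * C * (((N : ℝ) * T)⁻¹ * ∑ i ∈ range N, |∑ t ∈ range T, e i t|) := by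
  rw [objective_sub_eq_cross_term N T hT, abs_mul, abs_of_nonneg (by positivity),
    mul_left_comm, mul_sum]
  gcongr
  refine (abs_sum_le_sum_abs _ _).trans (sum_le_sum fun i _ => ?_)
  rw [abs_mul, abs_mul, abs_two]
  gcongr
  exact ha i

lemma tendsto_measure_ge_of_integral_le {Ω : ℕ → Type*} [∀ n, MeasurableSpace (Ω n)]
    (P : ∀ n, Measure (Ω n)) [∀ n, IsFiniteMeasure (P n)] {S : ∀ n, Ω n → ℝ}
    (hS : ∀ n ω, 0 ≤ S n ω) (hSint : ∀ n, Integrable (S n) (P n)) {b : ℕ → ℝ}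
    (hSb : ∀ n, ∫ ω, S n ω ∂(P n) ≤ b n) (hb : Tendsto b atTop (nhds 0)) {δ : ℝ} (hδ : 0 < δ) :
    Tendsto (fun n => P n {ω | δ ≤ S n ω}) atTop (nhds 0) := by
  have hmarkov : ∀ n, P n {ω | δ ≤ S n ω} ≤ ENNReal.ofReal (b n / δ) := fun n => by
    rw [← ofReal_measureReal]
    refine ENNReal.ofReal_le_ofReal ((le_div_iff₀' hδ).2 ?_)
    exact (mul_meas_ge_le_integral_of_nonneg (ae_of_all _ (hS n)) (hSint n) δ).trans (hSb n)
  refine tendsto_of_tendsto_of_tendsto_of_le_of_le tendsto_const_nhds ?_ (fun _ => zero_le) hmarkov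
  simpa using ENNReal.tendsto_ofReal (hb.div_const δ)

theorem uniform_objective_approximation_general
    {G : ℕ}
    (Ω : ℕ → Type) (mΩ : ∀ n, MeasurableSpace (Ω n))
    (P : ∀ n, Measure (Ω n)) (hP : ∀ n, IsProbabilityMeasure (P n))
    (N T : ℕ → ℕ)
    (hT : Tendsto (fun n => (T n : ℝ)) atTop atTop)
    -- data generating process
    (v : ∀ n, ℕ → ℕ → Ω n → ℝ) (hvmeas : ∀ n i t, Measurable (v n i t))
    (σ : ℕ → ℕ → ℝ)
    (g0 : ℕ → ℕ → Fin G) (μ0 : Fin G → ℝ)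
    (y : ∀ n, ℕ → ℕ → Ω n → ℝ)
    (hy : ∀ n i t ω, y n i t ω = μ0 (g0 n i) + σ n i * v n i t ω)
    -- Assumption 1(i): independence over time, mean zero, unit variance
    (hindep : ∀ n i, iIndepFun (fun t => v n i t) (P n))
    (hmean : ∀ n i t, ∫ ω, v n i t ω ∂(P n) = 0)
    (hvar : ∀ n i t, ∫ ω, (v n i t ω) ^ 2 ∂(P n) = 1)
    -- Assumption 1(ii): average error variance is o(T)
    (hA1ii : Tendsto
      (fun n => ((N n : ℝ)⁻¹ * ∑ i ∈ Finset.range (N n), (σ n i) ^ 2) / (T n : ℝ))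
      atTop (nhds 0))
    -- Assumption 1(iii): bounded parameter set containing the truth
    (M : Set (Fin G → ℝ)) (hMbdd : Bornology.IsBounded M)
    (ε : ℝ) (hε : 0 < ε) :
    Tendsto (fun n => P n {ω | ∃ (g : ℕ → Fin G), ∃ μ ∈ M,
        ε < |((N n : ℝ) * (T n : ℝ))⁻¹ * ∑ i ∈ Finset.range (N n), ∑ t ∈ Finset.range (T n),
              (y n i t ω - μ (g i)) ^ 2
            - ((N n : ℝ) * (T n : ℝ))⁻¹ * ∑ i ∈ Finset.range (N n), ∑ t ∈ Finset.range (T n),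
              (σ n i * v n i t ω) ^ 2
            - (N n : ℝ)⁻¹ * ∑ i ∈ Finset.range (N n), (μ0 (g0 n i) - μ (g i)) ^ 2|})
      atTop (nhds 0) := by
  obtain ⟨R, hR0, hR⟩ := hMbdd.exists_pos_norm_le
  set C := ‖μ0‖ + R
  have hgap : ∀ μ ∈ M, ∀ k j, |μ0 k - μ j| ≤ C := fun μ hμ k j =>
    (abs_sub _ _).trans (add_le_add (norm_le_pi_norm μ0 k) ((norm_le_pi_norm μ j).trans (hR μ hμ)))
  let D : ∀ n, Ω n → ℝ := fun n ω => 2 * C *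
    (((N n : ℝ) * T n)⁻¹ * ∑ i ∈ range (N n), |∑ t ∈ range (T n), σ n i * v n i t ω|)
  have hD : Tendsto (fun n => P n {ω | ε ≤ D n ω}) atTop (nhds 0) := by
    refine tendsto_measure_ge_of_integral_le P (fun n ω => by positivity)
      (fun n => (integrable_inv_mul_sum_abs_sum (hvmeas n) (hvar n) _ _ _).const_mul _)
      (fun n => ?_) (by simpa only [Real.sqrt_zero, mul_zero] using hA1ii.sqrt.const_mul (2 * C)) hε
    rw [integral_const_mul]
    exact mul_le_mul_of_nonneg_left (integral_inv_mul_sum_abs_sum_le (hvmeas n) (hindep n)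
      (hmean n) (hvar n) _ _ _) (by positivity)
  refine tendsto_of_tendsto_of_tendsto_of_le_of_le' tendsto_const_nhds hD
    (.of_forall fun _ => zero_le) ?_
  filter_upwards [hT.eventually_gt_atTop 0] with n hTn
  refine measure_mono fun ω ⟨g, μ, hμ, hgt⟩ => hgt.le.trans ?_
  simp_rw [hy, add_sub_right_comm]
  exact abs_objective_sub_le (N n) (T n) (by exact_mod_cast hTn.ne') _ _ fun i => hgap μ hμ _ _

/-- **Lemma A.2 (Uniform approximation of the kmeans objective).**
Under parts (i)–(iii) of Assumption 1, for every `ε > 0`, the probability that the kmeans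
objective `Q(g, μ)` deviates from
`(NT)^{-1} Σ_i Σ_t (σ_i v_{it})² + N^{-1} Σ_i (μ⁰_{g⁰_i} − μ_{g_i})²`
by more than `ε`, uniformly over all group assignments `g` and all `μ ∈ M`,
converges to zero. -/
theorem uniform_objective_approximation
    {G : ℕ} (hG : 0 < G)
    (Ω : ℕ → Type) (mΩ : ∀ n, MeasurableSpace (Ω n))
    (P : ∀ n, Measure (Ω n)) (hP : ∀ n, IsProbabilityMeasure (P n))
    (N T : ℕ → ℕ)
    (hN : Tendsto (fun n => (N n : ℝ)) atTop atTop)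
    (hT : Tendsto (fun n => (T n : ℝ)) atTop atTop)
    (hrate : Tendsto
      (fun n => Real.log (T n) * Real.sqrt (Real.log (N n)) / Real.sqrt (T n))
      atTop (nhds 0))
    -- data generating process
    (v : ∀ n, ℕ → ℕ → Ω n → ℝ) (hvmeas : ∀ n i t, Measurable (v n i t))
    (σ : ℕ → ℕ → ℝ) (hσ : ∀ n i, 0 ≤ σ n i)
    (g0 : ℕ → ℕ → Fin G) (μ0 : Fin G → ℝ)
    (y : ∀ n, ℕ → ℕ → Ω n → ℝ)
    (hy : ∀ n i t ω, y n i t ω = μ0 (g0 n i) + σ n i * v n i t ω)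
    -- Assumption 1(i): independence over time, mean zero, unit variance
    (hindep : ∀ n i, iIndepFun (fun t => v n i t) (P n))
    (hmean : ∀ n i t, ∫ ω, v n i t ω ∂(P n) = 0)
    (hvar : ∀ n i t, ∫ ω, (v n i t ω) ^ 2 ∂(P n) = 1)
    -- Assumption 1(ii): average error variance is o(T)
    (hA1ii : Tendsto
      (fun n => ((N n : ℝ)⁻¹ * ∑ i ∈ Finset.range (N n), (σ n i) ^ 2) / (T n : ℝ))
      atTop (nhds 0))
    -- Assumption 1(iii): bounded parameter set containing the truth
    (M : Set (Fin G → ℝ)) (hMbdd : Bornology.IsBounded M) (hμ0M : μ0 ∈ M)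
    (ε : ℝ) (hε : 0 < ε) :
    Tendsto (fun n => P n {ω | ∃ (g : ℕ → Fin G), ∃ μ ∈ M,
        ε < |((N n : ℝ) * (T n : ℝ))⁻¹ * ∑ i ∈ Finset.range (N n), ∑ t ∈ Finset.range (T n),
              (y n i t ω - μ (g i)) ^ 2
            - ((N n : ℝ) * (T n : ℝ))⁻¹ * ∑ i ∈ Finset.range (N n), ∑ t ∈ Finset.range (T n),
              (σ n i * v n i t ω) ^ 2
            - (N n : ℝ)⁻¹ * ∑ i ∈ Finset.range (N n), (μ0 (g0 n i) - μ (g i)) ^ 2|})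
      atTop (nhds 0) :=
  uniform_objective_approximation_general Ω mΩ P hP N T hT v hvmeas σ g0 μ0 y hy hindep hmean hvar
    hA1ii M hMbdd ε hε
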